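/- Let Θ be a real normed vector space, T a finite type of trajectories, and H a positive integer horizon. Suppose: (i) for each trajectory τ and each time t ∈ {1,…,H} there is an information state s_t(τ) in a set S and an action a_t(τ) ∈ {0,1}; (ii) f : Θ → S → ℝ is a parametrized policy with 0 < f(θ,s) < 1 for all θ, s, and θ ↦ f(θ,s) differentiable for every s, and write π_θ(1|s) = f(θ,s), π_θ(0|s) = 1 − f(θ,s); (iii) p_θ(τ) = μ(τ) · ∏_{t=1}^{H} π_θ(a_t(τ)|s_t(τ)) with μ(τ) > 0 for every τ; (iv) the regularized per-trajectory loss is L_θ(τ) = ℓ(τ) − β · Σ_{t=1}^{H} J_θ(s_t(τ)), where ℓ : T → ℝ, β ∈ ℝ, and J_θ(s) = −π_θ(1|s)·log π_θ(1|s) − π_θ(0|s)·log π_θ(0|s). Then the Fréchet derivative in θ of the expected loss G(θ) = Σ_{τ∈T} p_θ(τ)·L_θ(τ) equals Σ_{τ∈T} p_θ(τ)·L_θ(τ)·Σ_{t=1}^{H} D_θ[log π_θ(a_t(τ)|s_t(τ))] + β · Σ_{τ∈T} p_θ(τ) · Σ_{t=1}^{H} ( log π_θ(1|s_t(τ)) ·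 D_θ[π_θ(1|s_t(τ))] + log π_θ(0|s_t(τ)) · D_θ[π_θ(0|s_t(τ))] ). -/

import Mathlib

/-!
Log-derivative trick: the derivative of a product of nonvanishing factors is the product times
the sum of the derivatives of their logarithms, so `D p = p • ∑ t, D log π` and the product rule
splits `D (∑ τ, p L)` into the score-function term and `∑ τ, p • D L`. The entropy `J θ x` is the
binary entropy of `f θ x`, whose derivative `(log (1 - f) - log f) • D f` is
`-(log π₁ • D π₁ + log π₀ • D π₀)` because `D π₀ = -D π₁`.
-/

section
variable {E : Type*} [NormedAddCommGroup E] [NormedSpace ℝ E] {x : E}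

theorem hasFDerivAt_finsetProd_eq_smul_sum_fderiv_log {ι : Type*} {u : Finset ι} {g : ι → E → ℝ}
    (hg : ∀ i ∈ u, DifferentiableAt ℝ (g i) x) (hne : ∀ i ∈ u, g i x ≠ 0) :
    HasFDerivAt (fun y => ∏ i ∈ u, g i y)
      ((∏ i ∈ u, g i x) • ∑ i ∈ u, fderiv ℝ (fun y => Real.log (g i y)) x) x := by
  classical
  refine (HasFDerivAt.finsetProd fun i hi => (hg i hi).hasFDerivAt).congr_fderiv ?_
  rw [Finset.smul_sum]
  refine Finset.sum_congr rfl fun i hi => ?_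
  rw [((hg i hi).hasFDerivAt.log (hne i hi)).fderiv, smul_smul, ← Finset.mul_prod_erase u _ hi,
    mul_comm, ← mul_assoc, inv_mul_cancel₀ (hne i hi), one_mul]

theorem HasFDerivAt.binEntropy {q : E → ℝ} {q' : E →L[ℝ] ℝ} (hq : HasFDerivAt q q' x)
    (h₀ : q x ≠ 0) (h₁ : q x ≠ 1) :
    HasFDerivAt (fun y => Real.binEntropy (q y)) ((Real.log (1 - q x) - Real.log (q x)) • q') x :=
  (Real.hasDerivAt_binEntropy h₀ h₁).comp_hasFDerivAt x hq

theorem hasFDerivAt_sum_mul_of_hasFDerivAt_eq_smul {ι : Type*} [Fintype ι] {p L : E → ι → ℝ}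
    {ψ L' : ι → E →L[ℝ] ℝ} (hp : ∀ i, HasFDerivAt (p · i) (p x i • ψ i) x)
    (hL : ∀ i, HasFDerivAt (L · i) (L' i) x) :
    HasFDerivAt (fun y => ∑ i, p y i * L y i)
      ((∑ i, (p x i * L x i) • ψ i) + ∑ i, p x i • L' i) x := by
  refine (HasFDerivAt.fun_sum fun i _ => (hp i).fun_mul (hL i)).congr_fderiv ?_
  rw [Finset.sum_add_distrib, add_comm]
  simp only [smul_smul, mul_comm]

end

section BernoulliPolicy
variable {Θ S : Type*} {f : Θ → S → ℝ} {π : Θ → Bool → S → ℝ}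

theorem policy_ne_zero (hπ : ∀ θ b x, π θ b x = if b then f θ x else 1 - f θ x) {θ : Θ} {x : S}
    (hf0 : 0 < f θ x) (hf1 : f θ x < 1) (b : Bool) :
    π θ b x ≠ 0 := by
  cases b <;> simp only [hπ, Bool.false_eq_true, ↓reduceIte] <;> linarith

theorem differentiable_policy [NormedAddCommGroup Θ] [NormedSpace ℝ Θ]
    (hπ : ∀ θ b x, π θ b x = if b then f θ x else 1 - f θ x) {x : S}
    (hfd : Differentiable ℝ (fun θ => f θ x)) (b : Bool) :
    Differentiable ℝ (fun θ => π θ b x) := by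
  cases b <;> simp only [hπ, Bool.false_eq_true, ↓reduceIte]
  · exact hfd.const_sub 1
  · exact hfd

theorem policy_entropy_eq_binEntropy (hπ : ∀ θ b x, π θ b x = if b then f θ x else 1 - f θ x)
    (θ : Θ) (x : S) :
    -(π θ true x * Real.log (π θ true x)) - π θ false x * Real.log (π θ false x) =
      Real.binEntropy (f θ x) := by
  simp only [hπ, Bool.false_eq_true, ↓reduceIte, Real.binEntropy, Real.log_inv]
  ring

theorem hasFDerivAt_binEntropy_policy [NormedAddCommGroup Θ] [NormedSpace ℝ Θ]
    (hπ : ∀ θ b x, π θ b x = if b then f θ x else 1 - f θ x) {θ : Θ} {x : S}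
    (hfd : DifferentiableAt ℝ (fun θ => f θ x) θ)
    (hf0 : f θ x ≠ 0) (hf1 : f θ x ≠ 1) :
    HasFDerivAt (fun θ => Real.binEntropy (f θ x))
      (-(Real.log (π θ true x) • fderiv ℝ (fun θ' => π θ' true x) θ
        + Real.log (π θ false x) • fderiv ℝ (fun θ' => π θ' false x) θ)) θ := by
  refine (hfd.hasFDerivAt.binEntropy hf0 hf1).congr_fderiv ?_
  simp only [hπ, Bool.false_eq_true, ↓reduceIte, fderiv_const_sub]
  module

end BernoulliPolicy

theorem stmt0_general
    {Θ : Type*} [NormedAddCommGroup Θ] [NormedSpace ℝ Θ]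
    {T : Type*} [Fintype T] {S : Type*}
    (H : ℕ)
    (s : T → Fin H → S) (a : T → Fin H → Bool)
    (f : Θ → S → ℝ)
    (hf0 : ∀ θ x, 0 < f θ x) (hf1 : ∀ θ x, f θ x < 1)
    (hfd : ∀ x, Differentiable ℝ (fun θ => f θ x))
    (π : Θ → Bool → S → ℝ)
    (hπ : ∀ θ b x, π θ b x = if b then f θ x else 1 - f θ x)
    (μ : T → ℝ)
    (p : Θ → T → ℝ)
    (hp : ∀ θ τ, p θ τ = μ τ * ∏ t : Fin H, π θ (a τ t) (s τ t))
    (J : Θ → S → ℝ)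
    (hJ : ∀ θ x, J θ x =
      -(π θ true x * Real.log (π θ true x)) - π θ false x * Real.log (π θ false x))
    (ℓ : T → ℝ) (β : ℝ)
    (L : Θ → T → ℝ)
    (hL : ∀ θ τ, L θ τ = ℓ τ - β * ∑ t : Fin H, J θ (s τ t))
    (G : Θ → ℝ)
    (hG : ∀ θ, G θ = ∑ τ : T, p θ τ * L θ τ)
    (θ : Θ) :
    fderiv ℝ G θ =
      (∑ τ : T, (p θ τ * L θ τ) •
          ∑ t : Fin H, fderiv ℝ (fun θ' => Real.log (π θ' (a τ t) (s τ t))) θ)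
        + β • ∑ τ : T, p θ τ •
            ∑ t : Fin H,
              (Real.log (π θ true (s τ t)) • fderiv ℝ (fun θ' => π θ' true (s τ t)) θ
                + Real.log (π θ false (s τ t)) • fderiv ℝ (fun θ' => π θ' false (s τ t)) θ) := by
  have hp' : ∀ τ, HasFDerivAt (p · τ)
      (p θ τ • ∑ t, fderiv ℝ (fun θ' => Real.log (π θ' (a τ t) (s τ t))) θ) θ := by
    intro τ
    simp only [hp, ← smul_smul]
    exact (hasFDerivAt_finsetProd_eq_smul_sum_fderiv_log
      (fun t _ => (differentiable_policy hπ (hfd _) _).differentiableAt)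
      (fun t _ => policy_ne_zero hπ (hf0 θ _) (hf1 θ _) _)).const_mul (μ τ)
  have hL' : ∀ τ, HasFDerivAt (L · τ) (β • ∑ t,
      (Real.log (π θ true (s τ t)) • fderiv ℝ (fun θ' => π θ' true (s τ t)) θ
        + Real.log (π θ false (s τ t)) • fderiv ℝ (fun θ' => π θ' false (s τ t)) θ)) θ := by
    intro τ
    simp only [hL, hJ, policy_entropy_eq_binEntropy hπ]
    refine ((hasFDerivAt_const (ℓ τ) θ).sub ((HasFDerivAt.fun_sum fun t _ =>
      hasFDerivAt_binEntropy_policy hπ (hfd _ θ) (hf0 θ _).ne' (hf1 θ _).ne).const_mul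
        β)).congr_fderiv ?_
    rw [zero_sub, Finset.sum_neg_distrib, smul_neg, neg_neg]
  rw [show G = _ from funext hG, (hasFDerivAt_sum_mul_of_hasFDerivAt_eq_smul hp' hL').fderiv]
  simp only [Finset.smul_sum, smul_comm β]

/-- Theorem 3 of the paper (gradient of the entropy-regularized event-triggering
objective) on a finite trajectory space. -/
theorem stmt0
    {Θ : Type*} [NormedAddCommGroup Θ] [NormedSpace ℝ Θ]
    {T : Type*} [Fintype T] {S : Type*}
    (H : ℕ) (hH : 0 < H)
    (s : T → Fin H → S) (a : T → Fin H → Bool)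
    (f : Θ → S → ℝ)
    (hf0 : ∀ θ x, 0 < f θ x) (hf1 : ∀ θ x, f θ x < 1)
    (hfd : ∀ x, Differentiable ℝ (fun θ => f θ x))
    (π : Θ → Bool → S → ℝ)
    (hπ : ∀ θ b x, π θ b x = if b then f θ x else 1 - f θ x)
    (μ : T → ℝ) (hμ : ∀ τ, 0 < μ τ)
    (p : Θ → T → ℝ)
    (hp : ∀ θ τ, p θ τ = μ τ * ∏ t : Fin H, π θ (a τ t) (s τ t))
    (J : Θ → S → ℝ)
    (hJ : ∀ θ x, J θ x =
      -(π θ true x * Real.log (π θ true x)) - π θ false x * Real.log (π θ false x))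
    (ℓ : T → ℝ) (β : ℝ)
    (L : Θ → T → ℝ)
    (hL : ∀ θ τ, L θ τ = ℓ τ - β * ∑ t : Fin H, J θ (s τ t))
    (G : Θ → ℝ)
    (hG : ∀ θ, G θ = ∑ τ : T, p θ τ * L θ τ)
    (θ : Θ) :
    fderiv ℝ G θ =
      (∑ τ : T, (p θ τ * L θ τ) •
          ∑ t : Fin H, fderiv ℝ (fun θ' => Real.log (π θ' (a τ t) (s τ t))) θ)
        + β • ∑ τ : T, p θ τ •
            ∑ t : Fin H,
              (Real.log (π θ true (s τ t)) • fderiv ℝ (fun θ' => π θ' true (s τ t)) θ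
                + Real.log (π θ false (s τ t)) • fderiv ℝ (fun θ' => π θ' false (s τ t)) θ) :=
  stmt0_general H s a f hf0 hf1 hfd π hπ μ p hp J hJ ℓ β L hL G hG θ
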